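/- Let T be a 4-Steiner root of a graph G, let K be a maximal clique of G, and let X be a clique-intersection with X ⊊ K. If the subtree T⟨X⟩ has diameter 3 (is a bistar), then the center of T⟨K⟩ is a strict subset of the center of T⟨X⟩; in particular, diam(T⟨K⟩) = 4 and the unique central node of T⟨K⟩ is one of the two central nodes of T⟨X⟩. -/

import Mathlib

/-!
Tree distances have the median property: a vertex between `u` and `v` lies on a shortest path
from any `z` to `u` or to `v`. Consequently the subtree spanned by `S` has radius
`⌈diam / 2⌉`, attained at the vertices of a diametral path of `S` that are at most that far from
both ends; for even diameter the center is the midpoint alone.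

Since `K` is a clique, `diam T⟨K⟩ ≤ 4`. A maximal clique containing `X` but not contained in `K`
yields `u` with `f u` within `4` of `f '' X` but farther than `4` from some `f w`, `w ∈ K`. If
`diam T⟨K⟩` were `3`, both `f u` and `f w` would be close to the central edge `c₁c₂` of the bistar
`T⟨X⟩`, forcing `dist (f u) (f w) ≤ 4`. Hence `diam T⟨K⟩ = 4`, its center is a single vertex `m`,
and `m`, being within `2` of both ends of a diametral path of `T⟨X⟩`, is `c₁` or `c₂`, which are
both central in `T⟨X⟩`.
-/

noncomputable def setEcc {V : Type*} (T : SimpleGraph V) (S : Set V) (v : V) : ℕ :=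
  sSup {d | ∃ u ∈ S, T.dist v u = d}

noncomputable def setDiam {V : Type*} (T : SimpleGraph V) (S : Set V) : ℕ :=
  sSup {d | ∃ u ∈ S, ∃ w ∈ S, T.dist u w = d}

noncomputable def setRad {V : Type*} (T : SimpleGraph V) (S : Set V) : ℕ :=
  sInf {e | ∃ v ∈ S, setEcc T S v = e}

noncomputable def setCenter {V : Type*} (T : SimpleGraph V) (S : Set V) : Set V :=
  {v ∈ S | setEcc T S v = setRad T S}

/-- `T` is a `k`-Steiner root of `G` (via the injection `f` of the vertices of
`G` into the nodes of `T`): `T` is a tree and two distinct vertices of `G` are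
adjacent iff their images are at distance at most `k` in `T`. -/
def IsSteinerRoot (k : ℕ) {α β : Type*} (G : SimpleGraph α) (T : SimpleGraph β)
    (f : α → β) : Prop :=
  Function.Injective f ∧ T.IsTree ∧
    ∀ u v : α, u ≠ v → (G.Adj u v ↔ T.dist (f u) (f v) ≤ k)

/-- The vertex set of the smallest subtree of the tree `T` containing `X`:
all nodes lying on a path between two elements of `X`. -/
def span {β : Type*} (T : SimpleGraph β) (X : Set β) : Set β :=
  {w | ∃ u ∈ X, ∃ v ∈ X, ∃ p : T.Walk u v, p.IsPath ∧ w ∈ p.support}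

def IsMaxClique {α : Type*} (G : SimpleGraph α) (K : Set α) : Prop :=
  G.IsClique K ∧ ∀ K', G.IsClique K' → K ⊆ K' → K' = K

/-- `X` is the intersection of a nonempty family of maximal cliques of `G`. -/
def IsCliqueIntersection {α : Type*} (G : SimpleGraph α) (X : Set α) : Prop :=
  ∃ 𝒦 : Set (Set α), 𝒦.Nonempty ∧ (∀ K ∈ 𝒦, IsMaxClique G K) ∧ X = ⋂₀ 𝒦

namespace SimpleGraph

variable {V : Type*} {T : SimpleGraph V} {u v w z : V}

lemma Connected.exists_dist_eq_of_le_dist (hT : T.Connected) {k : ℕ} (hk : k ≤ T.dist u v) :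
    ∃ w, T.dist u w = k ∧ T.dist u w + T.dist w v = T.dist u v := by
  obtain ⟨p, hp⟩ := hT.exists_walk_length_eq_dist u v
  have htake := dist_le (p.take k)
  have hdrop := dist_le (p.drop k)
  have htri := hT.dist_triangle (u := u) (v := p.getVert k) (w := v)
  rw [Walk.take_length, hp] at htake
  rw [Walk.drop_length, hp] at hdrop
  exact ⟨p.getVert k, by omega, by omega⟩

lemma Connected.exists_isPath_mem_support_of_dist_add_dist_eq (hT : T.Connected)
    (h : T.dist u w + T.dist w v = T.dist u v) :
    ∃ p : T.Walk u v, p.IsPath ∧ w ∈ p.support := by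
  obtain ⟨q, hq⟩ := hT.exists_walk_length_eq_dist u w
  obtain ⟨r, hr⟩ := hT.exists_walk_length_eq_dist w v
  refine ⟨q.append r, (q.append r).isPath_of_length_eq_dist ?_, by simp⟩
  rw [Walk.length_append, hq, hr, h]

lemma Connected.exists_adj_of_dist_eq_three (hT : T.Connected) (h : T.dist u v = 3) :
    ∃ c₁ c₂, T.Adj c₁ c₂ ∧ T.dist u c₁ = 1 ∧ T.dist c₁ v = 2 ∧
      T.dist u c₂ = 2 ∧ T.dist c₂ v = 1 := by
  obtain ⟨c₁, h₁, h₁v⟩ := hT.exists_dist_eq_of_le_dist (u := u) (v := v) (k := 1) (by omega)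
  obtain ⟨c₂, h₂, h₂v⟩ := hT.exists_dist_eq_of_le_dist (u := c₁) (v := v) (k := 1) (by omega)
  have := hT.dist_triangle (u := u) (v := c₁) (w := c₂)
  have := hT.dist_triangle (u := u) (v := c₂) (w := v)
  exact ⟨c₁, c₂, dist_eq_one_iff_adj.1 h₂, h₁, by omega, by omega, by omega⟩

namespace IsTree

lemma length_eq_dist (hT : T.IsTree) {p : T.Walk u v} (hp : p.IsPath) : p.length = T.dist u v := by
  obtain ⟨q, hq, hql⟩ := hT.connected.exists_path_of_dist u v
  obtain ⟨_, -, huniq⟩ := hT.existsUnique_path u v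
  rw [huniq p hp, ← huniq q hq, hql]

lemma dist_add_dist_of_mem_support (hT : T.IsTree) {p : T.Walk u v} (hp : p.IsPath)
    (hw : w ∈ p.support) : T.dist u w + T.dist w v = T.dist u v := by
  classical
  rw [← hT.length_eq_dist (hp.takeUntil hw), ← hT.length_eq_dist (hp.dropUntil hw),
    ← Walk.length_append, Walk.take_spec, hT.length_eq_dist hp]

lemma dist_add_dist_or_of_mem_support (hT : T.IsTree) {p : T.Walk u v} (hp : p.IsPath)
    {a g : V} (ha : a ∈ p.support) (hg : g ∈ p.support) :
    T.dist u a + T.dist a g = T.dist u g ∨ T.dist g a + T.dist a v = T.dist g v := by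
  classical
  rw [← p.take_spec hg, Walk.mem_support_append_iff] at ha
  exact ha.imp (hT.dist_add_dist_of_mem_support (hp.takeUntil hg))
    (hT.dist_add_dist_of_mem_support (hp.dropUntil hg))

/-- A shortest path from `z` to a closest vertex `g` of `r` meets `r` only at `g`, so it continues
along `r` to the unique path from `z` to any vertex of `r`. -/
lemma dist_eq_add_of_forall_dist_le {g x : V} (hT : T.IsTree) {r : T.Walk g x} (hr : r.IsPath)
    (hmin : ∀ y ∈ r.support, T.dist z g ≤ T.dist z y) (hw : w ∈ r.support) :
    T.dist z w = T.dist z g + T.dist g w := by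
  obtain ⟨q, hq, hql⟩ := hT.connected.exists_path_of_dist z g
  have hr' := hr.support_nodup
  rw [← r.cons_tail_support, List.nodup_cons] at hr'
  have hqr : (q.append r).IsPath := by
    rw [Walk.isPath_def, Walk.support_append, List.nodup_append]
    refine ⟨hq.support_nodup, hr'.2, fun y hyq y' hyr hyy' => ?_⟩
    subst hyy'
    have hyg : y ≠ g := fun h => hr'.1 (h ▸ hyr)
    have hzyg := hT.dist_add_dist_of_mem_support hq hyq
    have hzy := hmin y (List.mem_of_mem_tail hyr)
    exact hyg (hT.connected.dist_eq_zero_iff.1 (by omega))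
  have hzwx := hT.dist_add_dist_of_mem_support hqr (Walk.mem_support_append_iff _ _ |>.2 (.inr hw))
  have hgwx := hT.dist_add_dist_of_mem_support hr hw
  have hzgx := hT.length_eq_dist hqr
  rw [Walk.length_append, hql, hT.length_eq_dist hr] at hzgx
  omega

lemma exists_gate (hT : T.IsTree) {p : T.Walk u v} (hp : p.IsPath) (z : V) :
    ∃ g ∈ p.support, ∀ w ∈ p.support, T.dist z w = T.dist z g + T.dist g w := by
  classical
  obtain ⟨g, hg, hmin⟩ := p.support.toFinset.exists_min_image (T.dist z) ⟨u, by simp⟩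
  rw [List.mem_toFinset] at hg
  have hmin' : ∀ y ∈ p.support, T.dist z g ≤ T.dist z y := fun y hy =>
    hmin y (List.mem_toFinset.2 hy)
  refine ⟨g, hg, fun w hw => ?_⟩
  rw [← p.take_spec hg, Walk.mem_support_append_iff] at hw
  rcases hw with hw | hw
  · refine hT.dist_eq_add_of_forall_dist_le (hp.takeUntil hg).reverse (fun y hy => ?_)
      (by simpa using hw)
    rw [Walk.support_reverse, List.mem_reverse] at hy
    exact hmin' y (p.support_takeUntil_subset_support hg hy)
  · exact hT.dist_eq_add_of_forall_dist_le (hp.dropUntil hg)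
      (fun y hy => hmin' y (p.support_dropUntil_subset_support hg hy)) hw

/-- The median property of trees, read off from the gate of `z` on a path from `u` to `v`
through `a`. -/
lemma dist_eq_add_or_dist_eq_add {a : V} (hT : T.IsTree)
    (h : T.dist u a + T.dist a v = T.dist u v) (z : V) :
    T.dist z u = T.dist z a + T.dist a u ∨ T.dist z v = T.dist z a + T.dist a v := by
  obtain ⟨p, hp, ha⟩ := hT.connected.exists_isPath_mem_support_of_dist_add_dist_eq h
  obtain ⟨g, hg, hgate⟩ := hT.exists_gate hp z
  have hzu := hgate u p.start_mem_support
  have hzv := hgate v p.end_mem_support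
  have hza := hgate a ha
  have hgu : T.dist g u = T.dist u g := dist_comm
  have hag : T.dist a g = T.dist g a := dist_comm
  have hau : T.dist a u = T.dist u a := dist_comm
  rcases hT.dist_add_dist_or_of_mem_support hp ha hg with h' | h' <;> omega

lemma dist_le_of_dist_add_dist_eq {a b m : V} {k : ℕ} (hT : T.IsTree)
    (hm : T.dist a m + T.dist m b = T.dist a b) (ha : T.dist z a ≤ T.dist a m + k)
    (hb : T.dist z b ≤ T.dist m b + k) : T.dist z m ≤ k := by
  have hma : T.dist m a = T.dist a m := dist_comm
  rcases hT.dist_eq_add_or_dist_eq_add hm z with h | h <;> omega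

lemma dist_le_or_dist_le_of_dist_add_dist_eq {a b c : V} (hT : T.IsTree)
    (h : T.dist a c + T.dist c b = T.dist a b) (z : V) :
    T.dist z c ≤ T.dist z a ∨ T.dist z c ≤ T.dist z b := by
  rcases hT.dist_eq_add_or_dist_eq_add h z with h' | h' <;> omega

/-- The bound `k + 1` on the distances to `c₁` and `c₂` improves to `k` for one of them, since tree
distances to adjacent vertices differ by one. -/
lemma dist_le_or_dist_le_of_dist_eq_three {a b c₁ c₂ : V} {k : ℕ} (hT : T.IsTree)
    (hab : T.dist a b = 3) (hc : T.Adj c₁ c₂) (h₁ : T.dist a c₁ = 1) (h₁' : T.dist c₁ b = 2)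
    (h₂ : T.dist a c₂ = 2) (h₂' : T.dist c₂ b = 1) (hza : T.dist z a ≤ k + 2)
    (hzb : T.dist z b ≤ k + 2) : T.dist z c₁ ≤ k ∨ T.dist z c₂ ≤ k := by
  have hzc₁ := hT.dist_le_of_dist_add_dist_eq (z := z) (k := k + 1)
    (by omega : T.dist a c₁ + T.dist c₁ b = T.dist a b) (by omega) (by omega)
  have hzc₂ := hT.dist_le_of_dist_add_dist_eq (z := z) (k := k + 1)
    (by omega : T.dist a c₂ + T.dist c₂ b = T.dist a b) (by omega) (by omega)
  rcases hT.dist_eq_dist_add_one_of_adj z hc with h | h <;> omega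

end IsTree
end SimpleGraph

open SimpleGraph

section Span

variable {V : Type*} {T : SimpleGraph V} {S S' : Set V}

lemma subset_span : S ⊆ span T S :=
  fun u hu => ⟨u, hu, u, hu, Walk.nil, Walk.IsPath.nil, Walk.start_mem_support _⟩

lemma span_mono (h : S ⊆ S') : span T S ⊆ span T S' :=
  fun _ ⟨u, hu, v, hv, p, hp, hw⟩ => ⟨u, h hu, v, h hv, p, hp, hw⟩

lemma SimpleGraph.IsTree.mem_span_iff (hT : T.IsTree) {w : V} :
    w ∈ span T S ↔ ∃ u ∈ S, ∃ v ∈ S, T.dist u w + T.dist w v = T.dist u v := by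
  constructor
  · rintro ⟨u, hu, v, hv, p, hp, hw⟩
    exact ⟨u, hu, v, hv, hT.dist_add_dist_of_mem_support hp hw⟩
  · rintro ⟨u, hu, v, hv, h⟩
    obtain ⟨p, hp, hw⟩ := hT.connected.exists_isPath_mem_support_of_dist_add_dist_eq h
    exact ⟨u, hu, v, hv, p, hp, hw⟩

lemma SimpleGraph.IsTree.exists_dist_le_of_mem_span (hT : T.IsTree) {x y : V}
    (hx : x ∈ span T S) (hy : y ∈ span T S) :
    ∃ a ∈ S, ∃ b ∈ S, T.dist x y ≤ T.dist a b := by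
  obtain ⟨u, hu, v, hv, hxuv⟩ := hT.mem_span_iff.1 hx
  obtain ⟨u', hu', v', hv', hyuv⟩ := hT.mem_span_iff.1 hy
  obtain ⟨b, hb, hxb⟩ : ∃ b ∈ S, T.dist x y ≤ T.dist b x := by
    rcases hT.dist_le_or_dist_le_of_dist_add_dist_eq hyuv x with h | h
    exacts [⟨u', hu', h.trans_eq dist_comm⟩, ⟨v', hv', h.trans_eq dist_comm⟩]
  rcases hT.dist_le_or_dist_le_of_dist_add_dist_eq hxuv b with h | h
  exacts [⟨b, hb, u, hu, hxb.trans h⟩, ⟨b, hb, v, hv, hxb.trans h⟩]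

end Span

section SetMetric

variable {V : Type*} {T : SimpleGraph V} {S : Set V}

lemma bddAbove_setDiam [Finite V] : BddAbove {d | ∃ u ∈ S, ∃ w ∈ S, T.dist u w = d} :=
  (Set.finite_range fun p : V × V => T.dist p.1 p.2).bddAbove.mono <| by
    rintro _ ⟨u, -, w, -, rfl⟩
    exact ⟨(u, w), rfl⟩

lemma le_setDiam [Finite V] {u w : V} (hu : u ∈ S) (hw : w ∈ S) : T.dist u w ≤ setDiam T S :=
  le_csSup bddAbove_setDiam ⟨u, hu, w, hw, rfl⟩

lemma setDiam_le {D : ℕ} (h : ∀ u ∈ S, ∀ w ∈ S, T.dist u w ≤ D) : setDiam T S ≤ D :=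
  csSup_le' fun _ ⟨u, hu, w, hw, hd⟩ => hd ▸ h u hu w hw

lemma exists_dist_eq_setDiam [Finite V] (hS : S.Nonempty) :
    ∃ u ∈ S, ∃ w ∈ S, T.dist u w = setDiam T S := by
  obtain ⟨u, hu⟩ := hS
  exact Nat.sSup_mem (s := {d | ∃ u ∈ S, ∃ w ∈ S, T.dist u w = d}) ⟨0, u, hu, u, hu, dist_self⟩
    bddAbove_setDiam

lemma nonempty_of_setDiam_ne_zero (h : setDiam T S ≠ 0) : S.Nonempty := by
  rw [Set.nonempty_iff_ne_empty]
  rintro rfl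
  simp [setDiam] at h

lemma le_setEcc [Finite V] {u v : V} (hu : u ∈ S) : T.dist v u ≤ setEcc T S v := by
  refine le_csSup ((Set.finite_range (T.dist v)).bddAbove.mono ?_) ⟨u, hu, rfl⟩
  rintro _ ⟨u, -, rfl⟩
  exact ⟨u, rfl⟩

lemma setEcc_le {v : V} {D : ℕ} (h : ∀ u ∈ S, T.dist v u ≤ D) : setEcc T S v ≤ D :=
  csSup_le' fun _ ⟨u, hu, hd⟩ => hd ▸ h u hu

lemma dist_le_two_mul_setEcc [Finite V] (hT : T.Connected) {a b : V} (ha : a ∈ S) (hb : b ∈ S)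
    (z : V) : T.dist a b ≤ 2 * setEcc T S z := by
  have hza : T.dist z a ≤ setEcc T S z := le_setEcc ha
  have hzb : T.dist z b ≤ setEcc T S z := le_setEcc hb
  have hazb := hT.dist_triangle (u := a) (v := z) (w := b)
  have haz : T.dist a z = T.dist z a := dist_comm
  omega

lemma setRad_le {v : V} (hv : v ∈ S) : setRad T S ≤ setEcc T S v :=
  Nat.sInf_le ⟨v, hv, rfl⟩

lemma le_setRad {d : ℕ} (hS : S.Nonempty) (h : ∀ v ∈ S, d ≤ setEcc T S v) : d ≤ setRad T S :=
  le_csInf (hS.image _) fun _ ⟨v, hv, he⟩ => he ▸ h v hv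

end SetMetric

namespace SimpleGraph.IsTree

variable {V : Type*} [Finite V] {T : SimpleGraph V} {S S' : Set V} {a b c : V}

lemma exists_dist_eq_setDiam_span (hT : T.IsTree) (hS : (span T S).Nonempty) :
    ∃ a ∈ S, ∃ b ∈ S, T.dist a b = setDiam T (span T S) := by
  obtain ⟨x, hx, y, hy, hxy⟩ := exists_dist_eq_setDiam hS
  obtain ⟨a, ha, b, hb, hab⟩ := hT.exists_dist_le_of_mem_span hx hy
  exact ⟨a, ha, b, hb, le_antisymm (le_setDiam (subset_span ha) (subset_span hb)) (hxy ▸ hab)⟩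

lemma setEcc_span_le (hT : T.IsTree) {k : ℕ} (ha : a ∈ S) (hb : b ∈ S)
    (hab : setDiam T (span T S) ≤ T.dist a b) (hc : T.dist a c + T.dist c b = T.dist a b)
    (hac : T.dist a c ≤ k) (hcb : T.dist c b ≤ k) : setEcc T (span T S) c ≤ k :=
  setEcc_le fun z hz => by
    have hza : T.dist z a ≤ T.dist a b := (le_setDiam hz (subset_span ha)).trans hab
    have hzb : T.dist z b ≤ T.dist a b := (le_setDiam hz (subset_span hb)).trans hab
    rw [dist_comm]
    exact hT.dist_le_of_dist_add_dist_eq hc (by omega) (by omega)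

lemma setRad_span (hT : T.IsTree) (hS : (span T S).Nonempty) :
    setRad T (span T S) = (setDiam T (span T S) + 1) / 2 := by
  obtain ⟨a, ha, b, hb, hab⟩ := hT.exists_dist_eq_setDiam_span hS
  rw [← hab]
  obtain ⟨c, hac, hc⟩ :=
    hT.connected.exists_dist_eq_of_le_dist (u := a) (v := b) (k := (T.dist a b + 1) / 2) (by omega)
  refine le_antisymm ?_ (le_setRad hS fun z _ => ?_)
  · calc setRad T (span T S) ≤ setEcc T (span T S) c :=
          setRad_le (hT.mem_span_iff.2 ⟨a, ha, b, hb, hc⟩)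
      _ ≤ _ := hT.setEcc_span_le ha hb hab.ge hc (by omega) (by omega)
  · have := dist_le_two_mul_setEcc hT.connected (S := span T S) (subset_span ha)
      (subset_span hb) z
    omega

lemma dist_le_of_mem_setCenter_span (hT : T.IsTree) {z w : V} (hz : z ∈ setCenter T (span T S))
    (hw : w ∈ span T S) : T.dist z w ≤ (setDiam T (span T S) + 1) / 2 :=
  hT.setRad_span ⟨w, hw⟩ ▸ hz.2 ▸ le_setEcc hw

lemma mem_setCenter_span (hT : T.IsTree) (ha : a ∈ S) (hb : b ∈ S)
    (hab : setDiam T (span T S) = T.dist a b) (hc : T.dist a c + T.dist c b = T.dist a b)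
    (hac : T.dist a c ≤ (T.dist a b + 1) / 2) (hcb : T.dist c b ≤ (T.dist a b + 1) / 2) :
    c ∈ setCenter T (span T S) := by
  have hcS : c ∈ span T S := hT.mem_span_iff.2 ⟨a, ha, b, hb, hc⟩
  refine ⟨hcS, le_antisymm ?_ (setRad_le hcS)⟩
  rw [hT.setRad_span ⟨c, hcS⟩, hab]
  exact hT.setEcc_span_le ha hb hab.le hc hac hcb

lemma setCenter_span_eq_singleton (hT : T.IsTree) (hS : (span T S).Nonempty) {r : ℕ}
    (h : setDiam T (span T S) = 2 * r) : ∃ m, setCenter T (span T S) = {m} := by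
  obtain ⟨a, ha, b, hb, hab⟩ := hT.exists_dist_eq_setDiam_span hS
  obtain ⟨m, ham, hm⟩ :=
    hT.connected.exists_dist_eq_of_le_dist (u := a) (v := b) (k := r) (by omega)
  refine ⟨m, Set.eq_singleton_iff_unique_mem.2
    ⟨hT.mem_setCenter_span ha hb hab.symm hm (by omega) (by omega), fun z hz => ?_⟩⟩
  have hza := hT.dist_le_of_mem_setCenter_span hz (subset_span ha)
  have hzb := hT.dist_le_of_mem_setCenter_span hz (subset_span hb)
  have hzm := hT.dist_le_of_dist_add_dist_eq (z := z) (k := 0) hm (by omega) (by omega)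
  exact hT.connected.dist_eq_zero_iff.1 (by omega)

lemma dist_le_four_of_setDiam_span_eq_three (hT : T.IsTree) (hS : setDiam T (span T S) = 3)
    {z w : V} (hz : ∀ s ∈ S, T.dist z s ≤ 4) (hw : ∀ s ∈ S, T.dist w s ≤ 3) :
    T.dist z w ≤ 4 := by
  obtain ⟨a, ha, b, hb, hab⟩ :=
    hT.exists_dist_eq_setDiam_span (nonempty_of_setDiam_ne_zero (T := T) (hS ▸ three_ne_zero))
  rw [hS] at hab
  obtain ⟨c₁, c₂, hc, h₁, h₁', h₂, h₂'⟩ := hT.connected.exists_adj_of_dist_eq_three hab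
  have hw' := hT.dist_le_or_dist_le_of_dist_eq_three (z := w) (k := 1) hab hc h₁ h₁' h₂ h₂'
    (hw a ha) (hw b hb)
  have hz' := hT.dist_le_or_dist_le_of_dist_eq_three (z := z) (k := 2) hab hc h₁ h₁' h₂ h₂'
    (hz a ha) (hz b hb)
  have hwc := hT.dist_eq_dist_add_one_of_adj w hc
  have hzw₁ := hT.connected.dist_triangle (u := z) (v := c₁) (w := w)
  have hzw₂ := hT.connected.dist_triangle (u := z) (v := c₂) (w := w)
  have hc₁w : T.dist c₁ w = T.dist w c₁ := dist_comm
  have hc₂w : T.dist c₂ w = T.dist w c₂ := dist_comm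
  omega

lemma setCenter_span_ssubset (hT : T.IsTree) (hSS' : span T S ⊆ span T S')
    (hS : setDiam T (span T S) = 3) (hS' : setDiam T (span T S') = 4) :
    setCenter T (span T S') ⊂ setCenter T (span T S) := by
  have hne : (span T S).Nonempty := nonempty_of_setDiam_ne_zero (T := T) (hS ▸ three_ne_zero)
  obtain ⟨a, ha, b, hb, hab⟩ := hT.exists_dist_eq_setDiam_span hne
  rw [hS] at hab
  obtain ⟨c₁, c₂, hc, h₁, h₁', h₂, h₂'⟩ := hT.connected.exists_adj_of_dist_eq_three hab
  have hc₁ : c₁ ∈ setCenter T (span T S) :=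
    hT.mem_setCenter_span ha hb (hS.trans hab.symm) (by omega) (by omega) (by omega)
  have hc₂ : c₂ ∈ setCenter T (span T S) :=
    hT.mem_setCenter_span ha hb (hS.trans hab.symm) (by omega) (by omega) (by omega)
  obtain ⟨m, hm⟩ := hT.setCenter_span_eq_singleton (hne.mono hSS') (r := 2) hS'
  have hmS' : m ∈ setCenter T (span T S') := hm ▸ rfl
  have hma := hT.dist_le_of_mem_setCenter_span hmS' (hSS' (subset_span ha))
  have hmb := hT.dist_le_of_mem_setCenter_span hmS' (hSS' (subset_span hb))
  rw [hS'] at hma hmb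
  have hmc := hT.dist_le_or_dist_le_of_dist_eq_three (k := 0) hab hc h₁ h₁' h₂ h₂' hma hmb
  simp only [Nat.le_zero, hT.connected.dist_eq_zero_iff] at hmc
  rw [hm]
  rcases hmc with rfl | rfl
  · exact (Set.ssubset_iff_of_subset (Set.singleton_subset_iff.2 hc₁)).2 ⟨c₂, hc₂, hc.ne'⟩
  · exact (Set.ssubset_iff_of_subset (Set.singleton_subset_iff.2 hc₂)).2 ⟨c₁, hc₁, hc.ne⟩

end SimpleGraph.IsTree

section SteinerRoot

variable {α β : Type*} {G : SimpleGraph α} {T : SimpleGraph β} {f : α → β} {k : ℕ}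
  {K X : Set α}

lemma IsMaxClique.exists_not_adj (hK : IsMaxClique G K) {u : α} (hu : u ∉ K) :
    ∃ w ∈ K, ¬ G.Adj u w := by
  by_contra! h
  have hclique : G.IsClique (insert u K) := hK.1.insert fun w hw _ => h w hw
  exact hu (hK.2 _ hclique (Set.subset_insert u K) ▸ Set.mem_insert u K)

lemma IsCliqueIntersection.exists_isMaxClique_not_subset (hX : IsCliqueIntersection G X)
    (hK : IsMaxClique G K) (hXK : X ⊂ K) : ∃ K', IsMaxClique G K' ∧ X ⊆ K' ∧ ¬ K' ⊆ K := by
  obtain ⟨𝒦, -, h𝒦, rfl⟩ := hX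
  obtain ⟨v, hvK, hvX⟩ := Set.exists_of_ssubset hXK
  obtain ⟨K', hK', hvK'⟩ : ∃ K' ∈ 𝒦, v ∉ K' := by simpa [Set.mem_sInter] using hvX
  refine ⟨K', h𝒦 K' hK', Set.sInter_subset_of_mem hK', fun hK'K => hvK' ?_⟩
  rwa [← (h𝒦 K' hK').2 K hK.1 hK'K]

lemma IsSteinerRoot.dist_le_of_isClique (h : IsSteinerRoot k G T f) (hK : G.IsClique K)
    {a b : α} (ha : a ∈ K) (hb : b ∈ K) : T.dist (f a) (f b) ≤ k := by
  rcases eq_or_ne a b with rfl | hne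
  · simp
  · exact (h.2.2 a b hne).1 (hK ha hb hne)

lemma IsSteinerRoot.lt_dist_of_not_adj (h : IsSteinerRoot k G T f) {a b : α} (hne : a ≠ b)
    (hab : ¬ G.Adj a b) : k < T.dist (f a) (f b) :=
  not_le.1 fun hle => hab ((h.2.2 a b hne).2 hle)

lemma IsSteinerRoot.setDiam_span_image_le (h : IsSteinerRoot k G T f) (hK : G.IsClique K) :
    setDiam T (span T (f '' K)) ≤ k :=
  setDiam_le fun x hx y hy => by
    obtain ⟨_, ⟨a, ha, rfl⟩, _, ⟨b, hb, rfl⟩, hxy⟩ := h.2.1.exists_dist_le_of_mem_span hx hy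
    exact hxy.trans (h.dist_le_of_isClique hK ha hb)

/-- `u` is taken from a maximal clique that contains `X` but is not contained in `K`. -/
lemma IsSteinerRoot.exists_dist_le_and_lt_dist (h : IsSteinerRoot k G T f)
    (hK : IsMaxClique G K) (hX : IsCliqueIntersection G X) (hXK : X ⊂ K) :
    ∃ u, (∀ x ∈ X, T.dist (f u) (f x) ≤ k) ∧ ∃ w ∈ K, k < T.dist (f u) (f w) := by
  obtain ⟨K', hK', hXK', hK'K⟩ := hX.exists_isMaxClique_not_subset hK hXK
  obtain ⟨u, huK', huK⟩ := Set.not_subset.1 hK'K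
  obtain ⟨w, hwK, huw⟩ := hK.exists_not_adj huK
  exact ⟨u, fun x hx => h.dist_le_of_isClique hK'.1 huK' (hXK' hx),
    w, hwK, h.lt_dist_of_not_adj (fun h => huK (h ▸ hwK)) huw⟩

end SteinerRoot

theorem stmt13_general {α β : Type*} [Fintype β]
    (G : SimpleGraph α) (T : SimpleGraph β) (f : α → β)
    (hroot : IsSteinerRoot 4 G T f) (K X : Set α)
    (hK : IsMaxClique G K) (hX : IsCliqueIntersection G X) (hsub : X ⊂ K)
    (hd : setDiam T (span T (f '' X)) = 3) :
    setCenter T (span T (f '' K)) ⊂ setCenter T (span T (f '' X)) ∧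
    setDiam T (span T (f '' K)) = 4 ∧
    ∃ c, setCenter T (span T (f '' K)) = {c} := by
  have hT := hroot.2.1
  have hXK : span T (f '' X) ⊆ span T (f '' K) := span_mono (Set.image_mono hsub.subset)
  obtain ⟨u, hu, w, hw, huw⟩ := hroot.exists_dist_le_and_lt_dist hK hX hsub
  have hwK : f w ∈ span T (f '' K) := subset_span (Set.mem_image_of_mem f hw)
  have hB : setDiam T (span T (f '' K)) = 4 := by
    refine le_antisymm (hroot.setDiam_span_image_le hK.1) ?_
    by_contra! hB
    refine huw.not_ge (hT.dist_le_four_of_setDiam_span_eq_three hd ?_ fun s hs => ?_)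
    · rintro _ ⟨x, hx, rfl⟩
      exact hu x hx
    · exact (le_setDiam hwK (hXK (subset_span hs))).trans (by omega)
  obtain ⟨m, hm⟩ := hT.setCenter_span_eq_singleton (r := 2) ⟨_, hwK⟩ hB
  exact ⟨hT.setCenter_span_ssubset hXK hd hB, hB, m, hm⟩

/-- If `T` is a `4`-Steiner root of `G`, `X ⊊ K` is a clique-intersection
strictly contained in a maximal clique `K`, and `T⟨X⟩` is a bistar
(diameter 3), then `C(T⟨K⟩) ⊊ C(T⟨X⟩)`; in particular `diam(T⟨K⟩) = 4` and
the center of `T⟨K⟩` is a single node. -/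
theorem stmt13 {α β : Type*} [Fintype α] [Fintype β]
    (G : SimpleGraph α) (hG : G.Connected) (T : SimpleGraph β) (f : α → β)
    (hroot : IsSteinerRoot 4 G T f) (K X : Set α)
    (hK : IsMaxClique G K) (hX : IsCliqueIntersection G X) (hsub : X ⊂ K)
    (hd : setDiam T (span T (f '' X)) = 3) :
    setCenter T (span T (f '' K)) ⊂ setCenter T (span T (f '' X)) ∧
    setDiam T (span T (f '' K)) = 4 ∧
    ∃ c, setCenter T (span T (f '' K)) = {c} :=
  stmt13_general G T f hroot K X hK hX hsub hd
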